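/- For each self-delimiting Turing machine C there exists a tuatara machine V such that ζ_V = Ω_C. -/

import Mathlib

open scoped ENNReal

/-- The domain of a Turing machine (a partial function on binary strings). -/
def dom (f : List Bool →. List Bool) : Set (List Bool) := {p | (f p).Dom}

/-- A machine is self-delimiting if its domain is prefix-free. -/
def SelfDelim (f : List Bool →. List Bool) : Prop :=
  ∀ p ∈ dom f, ∀ q ∈ dom f, p <+: q → p = q

/-- Chaitin's Omega number of a machine, in `[0,∞]`. -/
noncomputable def Omega (f : List Bool →. List Bool) : ℝ≥0∞ :=
  ∑' p : dom f, (2 : ℝ≥0∞)⁻¹ ^ (p : List Bool).length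

/-- `bin n` is the binary expansion of `n` with the leading 1 removed. -/
def bin (n : ℕ) : List Bool := (Nat.bits n).reverse.tail

/-- `Υ[A]`: the set of positive integers whose `bin`-code lies in `A`. -/
def Ups (A : Set (List Bool)) : Set ℕ := {n | 1 ≤ n ∧ bin n ∈ A}

/-- The zeta number of a machine, in `[0,∞]`. -/
noncomputable def zeta (f : List Bool →. List Bool) : ℝ≥0∞ :=
  ∑' n : Ups (dom f), ((n : ℕ) : ℝ≥0∞)⁻¹

/-- `U` is a universal self-delimiting Turing machine. -/
def UnivSD (U : List Bool →. List Bool) : Prop :=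
  SelfDelim U ∧ ∀ C : List Bool →. List Bool, Partrec C → SelfDelim C →
    ∃ c : ℕ, ∀ x ∈ dom C, ∃ p : List Bool, p.length ≤ x.length + c ∧ U p = C x

/-- `T` is a universal (plain) Turing machine. -/
def UnivTM (T : List Bool →. List Bool) : Prop :=
  ∀ C : List Bool →. List Bool, Partrec C →
    ∃ c : ℕ, ∀ x ∈ dom C, ∃ p : List Bool, p.length ≤ x.length + c ∧ T p = C x

/-- Program-size / plain complexity of a string w.r.t. a machine. -/
noncomputable def Cpx (f : List Bool →. List Bool) (y : List Bool) : ℕ :=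
  sInf {n : ℕ | ∃ w : List Bool, w.length = n ∧ y ∈ f w}

/-- Natural complexity of a string w.r.t. a machine, with `min ∅ = ∞`. -/
noncomputable def nabla (f : List Bool →. List Bool) (y : List Bool) : ℝ≥0∞ :=
  sInf {c : ℝ≥0∞ | ∃ n : ℕ, 1 ≤ n ∧ y ∈ f (bin n) ∧ c = (n : ℝ≥0∞)}

/-- The real number with binary digit sequence `x`. -/
noncomputable def realDigits (x : ℕ → Bool) : ℝ :=
  ∑' i : ℕ, (if x i then (1 : ℝ) else 0) * (2 : ℝ)⁻¹ ^ (i + 1)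

/-- The extended nonnegative real with binary digit sequence `x`. -/
noncomputable def ennDigits (x : ℕ → Bool) : ℝ≥0∞ :=
  ∑' i : ℕ, (if x i then (1 : ℝ≥0∞) else 0) * (2 : ℝ≥0∞)⁻¹ ^ (i + 1)

/-- The string of the first `m` digits of the sequence `x`. -/
def prefixStr (x : ℕ → Bool) (m : ℕ) : List Bool := (List.range m).map x

/-- A real is computable if it is approximated to within `2⁻ⁿ` by a computable
sequence of rationals. -/
def ComputableReal (s : ℝ) : Prop :=
  ∃ f : ℕ → ℚ, Computable f ∧ ∀ n : ℕ, |s - (f n : ℝ)| ≤ (2 : ℝ)⁻¹ ^ n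


/-!
Each term `2 ^ (-|p|)` of `Ω_C` is expanded greedily as an infinite Egyptian fraction
`∑ᵢ 1 / nᵢ` whose denominators all have `2`-adic valuation `unbin p`, so that the expansions
for different `p` are disjoint. Admissible denominators occur with bounded gaps, so if the
remainder stayed above some `L > 0` the denominators would grow at most linearly, contradicting
the divergence of the harmonic series; hence each expansion is exact. The machine `V` on input
`bin n` looks for `p` and `i` with `n = nᵢ(p)` and then runs `C` on `p`, so
`ζ_V = ∑_{p ∈ dom C} 2 ^ (-|p|) = Ω_C`, and `ζ_V ≤ 1` is the Kraft–McMillan inequality for the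
prefix-free set `dom C`.
-/

/-! ### Kraft's inequality -/

def PrefixFree {α : Type*} (S : Set (List α)) : Prop := ∀ p ∈ S, ∀ q ∈ S, p <+: q → p = q

lemma PrefixFree.uniquelyDecodable {α : Type*} {S : Set (List α)} (hS : PrefixFree S)
    (hnil : [] ∉ S) : InformationTheory.UniquelyDecodable S := by
  have hne : ∀ w ∈ S, w ≠ [] := fun w hw h => hnil (h ▸ hw)
  intro L₁
  induction L₁ with
  | nil =>
    rintro (_ | ⟨v, L₂⟩) - h₂ h
    · rfl
    · simp [hne v (h₂ v (by simp))] at h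
  | cons w L₁ ih =>
    rintro (_ | ⟨v, L₂⟩) h₁ h₂ h
    · simp [hne w (h₁ w (by simp))] at h
    · simp only [List.flatten_cons] at h
      have hw : w ∈ S := h₁ w (by simp)
      have hv : v ∈ S := h₂ v (by simp)
      obtain rfl : w = v := by
        rcases List.prefix_or_prefix_of_prefix (List.prefix_append w _)
          (h ▸ List.prefix_append v _) with hp | hp
        exacts [hS w hw v hv hp, (hS v hv w hw hp).symm]
      rw [ih L₂ (fun x hx => h₁ x (by simp [hx])) (fun x hx => h₂ x (by simp [hx]))
        (List.append_cancel_left h)]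

lemma PrefixFree.sum_le_one {α : Type*} [Fintype α] [Nonempty α] {S : Finset (List α)}
    (hS : PrefixFree (S : Set (List α))) :
    ∑ w ∈ S, (1 / Fintype.card α : ℝ) ^ w.length ≤ 1 := by
  by_cases hnil : [] ∈ S
  · have hS' : S = {[]} := Finset.eq_singleton_iff_unique_mem.2
      ⟨hnil, fun w hw => (hS [] hnil w hw List.nil_prefix).symm⟩
    simp [hS']
  · exact InformationTheory.kraft_mcmillan_inequality (hS.uniquelyDecodable hnil)

lemma Omega_le_one {C : List Bool →. List Bool} (hC : SelfDelim C) : Omega C ≤ 1 := by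
  rw [Omega, ENNReal.tsum_eq_iSup_sum]
  refine iSup_le fun s => ?_
  have hpf : PrefixFree (s.map (Function.Embedding.subtype (· ∈ dom C)) : Set (List Bool)) :=
    fun _ hp _ hq => by
      obtain ⟨⟨p, hpC⟩, -, rfl⟩ := Finset.mem_map.1 (Finset.mem_coe.1 hp)
      obtain ⟨⟨q, hqC⟩, -, rfl⟩ := Finset.mem_map.1 (Finset.mem_coe.1 hq)
      exact hC p hpC q hqC
  calc ∑ p ∈ s, (2 : ℝ≥0∞)⁻¹ ^ (p : List Bool).length
      = ENNReal.ofReal (∑ w ∈ s.map (Function.Embedding.subtype _),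
          (1 / Fintype.card Bool : ℝ) ^ w.length) := by
        rw [ENNReal.ofReal_sum_of_nonneg (fun _ _ => by positivity), Finset.sum_map]
        refine Finset.sum_congr rfl fun p _ => ?_
        rw [ENNReal.ofReal_pow (by positivity)]
        simp
    _ ≤ 1 := ENNReal.ofReal_le_one.2 hpf.sum_le_one

/-! ### The inverse of `bin` -/

def unbin (w : List Bool) : ℕ := w.foldl (fun n b => Nat.bit b n) 1

lemma unbin_append_singleton (w : List Bool) (b : Bool) :
    unbin (w ++ [b]) = Nat.bit b (unbin w) := by
  simp [unbin, List.foldl_append]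

lemma unbin_ne_zero (w : List Bool) : unbin w ≠ 0 := by
  induction w using List.reverseRecOn with
  | nil => simp [unbin]
  | append_singleton w b ih => simp [unbin_append_singleton, ih]

lemma bin_one : bin 1 = [] := by simp [bin]

lemma bin_bit {n : ℕ} (hn : n ≠ 0) (b : Bool) : bin (Nat.bit b n) = bin n ++ [b] := by
  have hbits : (Nat.bits n).reverse ≠ [] := by
    simpa [← List.length_pos_iff, Nat.size_eq_bits_len] using Nat.size_pos.2 (Nat.pos_of_ne_zero hn)
  rw [bin, bin, Nat.bits_append_bit n b (fun h => absurd h hn), List.reverse_cons,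
    List.tail_append_singleton_of_ne_nil hbits]

lemma bin_unbin (w : List Bool) : bin (unbin w) = w := by
  induction w using List.reverseRecOn with
  | nil => exact bin_one
  | append_singleton w b ih => rw [unbin_append_singleton, bin_bit (unbin_ne_zero w), ih]

lemma unbin_bin {n : ℕ} (hn : n ≠ 0) : unbin (bin n) = n := by
  induction n using Nat.binaryRecFromOne with
  | zero => exact absurd rfl hn
  | one => rw [bin_one]; rfl
  | bit b n hn' ih => rw [bin_bit hn', unbin_append_singleton, ih hn']

lemma unbin_injective : Function.Injective unbin :=
  Function.LeftInverse.injective bin_unbin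

/-! ### Greedy Egyptian fractions -/

lemma not_summable_inv_of_le_add {f : ℕ → ℝ} {E : ℝ} (hpos : ∀ i, 0 < f i) (hE : 0 ≤ E)
    (hstep : ∀ i, f (i + 1) ≤ f i + E) : ¬ Summable fun i => (f i)⁻¹ := by
  set B := f 0 + E
  have hB : 0 < B := by linarith [hpos 0]
  have hlin : ∀ i : ℕ, f i ≤ B * (i + 1) := by
    intro i
    induction i with
    | zero => simp [B, hE]
    | succ i ih => push_cast; linarith [hstep i, hpos 0]
  intro hsum
  refine Real.not_summable_natCast_inv ((summable_nat_add_iff 1).1 ?_)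
  refine (hsum.mul_left B).of_nonneg_of_le (fun i => by positivity) fun i => ?_
  calc ((i + 1 : ℕ) : ℝ)⁻¹ = B * (B * (i + 1))⁻¹ := by field_simp; push_cast; ring
    _ ≤ B * (f i)⁻¹ := by gcongr; exacts [hpos i, hlin i]

namespace Greedy

variable (g : ℕ → ℕ)

/-- A state `(x, a, b)` records the last term `x` and the remainder `a / b`. -/
def nextTerm (s : ℕ × ℕ × ℕ) : ℕ := g (max s.1 (s.2.2 / s.2.1))

def step (s : ℕ × ℕ × ℕ) : ℕ × ℕ × ℕ :=
  (nextTerm g s, s.2.1 * nextTerm g s - s.2.2, s.2.2 * nextTerm g s)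

def state (a b i : ℕ) : ℕ × ℕ × ℕ := (step g)^[i] (0, a, b)

def term (a b i : ℕ) : ℕ := nextTerm g (state g a b i)

noncomputable def rem (a b i : ℕ) : ℝ := (state g a b i).2.1 / (state g a b i).2.2

variable {g} {a b : ℕ}

lemma state_succ (i : ℕ) : state g a b (i + 1) = step g (state g a b i) :=
  Function.iterate_succ_apply' _ _ _

lemma term_succ (i : ℕ) : term g a b (i + 1) =
    g (max (term g a b i) ((state g a b (i + 1)).2.2 / (state g a b (i + 1)).2.1)) := by
  rw [term, nextTerm, state_succ]
  rfl

lemma den_lt_num_mul_nextTerm (hg : ∀ n, n < g n) {s : ℕ × ℕ × ℕ} (hs : 0 < s.2.1) :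
    s.2.2 < s.2.1 * nextTerm g s := by
  rw [mul_comm, ← Nat.div_lt_iff_lt_mul hs]
  exact (le_max_right _ _).trans_lt (hg _)

lemma state_pos (hg : ∀ n, n < g n) (ha : 0 < a) (hb : 0 < b) (i : ℕ) :
    0 < (state g a b i).2.1 ∧ 0 < (state g a b i).2.2 := by
  induction i with
  | zero => exact ⟨ha, hb⟩
  | succ i ih =>
    rw [state_succ]
    exact ⟨Nat.sub_pos_of_lt (den_lt_num_mul_nextTerm hg ih.1),
      Nat.mul_pos ih.2 ((Nat.zero_le _).trans_lt (hg _))⟩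

lemma term_pos (hg : ∀ n, n < g n) (i : ℕ) : 0 < term g a b i :=
  (Nat.zero_le _).trans_lt (hg _)

lemma term_strictMono (hg : ∀ n, n < g n) : StrictMono (term g a b) :=
  strictMono_nat_of_lt_succ fun i => by
    rw [term_succ]
    exact (le_max_left _ _).trans_lt (hg _)

lemma rem_pos (hg : ∀ n, n < g n) (ha : 0 < a) (hb : 0 < b) (i : ℕ) : 0 < rem g a b i := by
  obtain ⟨h1, h2⟩ := state_pos hg ha hb i
  unfold rem
  positivity

lemma rem_succ (hg : ∀ n, n < g n) (ha : 0 < a) (hb : 0 < b) (i : ℕ) :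
    rem g a b (i + 1) = rem g a b i - ((term g a b i : ℝ))⁻¹ := by
  obtain ⟨h1, h2⟩ := state_pos hg ha hb i
  have hlt := den_lt_num_mul_nextTerm hg h1
  have ht : 0 < nextTerm g (state g a b i) := term_pos hg i
  rw [rem, rem, state_succ, term]
  simp only [step]
  rw [Nat.cast_sub hlt.le]
  push_cast
  field_simp

lemma sum_inv_term (hg : ∀ n, n < g n) (ha : 0 < a) (hb : 0 < b) (n : ℕ) :
    ∑ i ∈ Finset.range n, ((term g a b i : ℝ))⁻¹ = a / b - rem g a b n := by
  induction n with
  | zero => simp [rem, state]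
  | succ n ih => rw [Finset.sum_range_succ, ih, rem_succ hg ha hb]; ring

lemma term_succ_le (hg : ∀ n, n < g n) {D : ℕ} (hD : ∀ n, g n ≤ n + D) (ha : 0 < a)
    (hb : 0 < b) {L : ℝ} (hL : 0 < L) (hrem : ∀ i, L ≤ rem g a b i) (i : ℕ) :
    (term g a b (i + 1) : ℝ) ≤ term g a b i + (L⁻¹ + D) := by
  obtain ⟨h1, h2⟩ := state_pos hg ha hb (i + 1)
  have hdiv : (((state g a b (i + 1)).2.2 / (state g a b (i + 1)).2.1 : ℕ) : ℝ) ≤ L⁻¹ := by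
    refine Nat.cast_div_le.trans ?_
    rw [← inv_div]
    exact inv_anti₀ hL (hrem (i + 1))
  have hnat : term g a b (i + 1) ≤
      term g a b i + (state g a b (i + 1)).2.2 / (state g a b (i + 1)).2.1 + D := by
    rw [term_succ]
    exact (hD _).trans
      (Nat.add_le_add_right (max_le_add_of_nonneg (Nat.zero_le _) (Nat.zero_le _)) D)
  have := (Nat.cast_le (α := ℝ)).2 hnat
  push_cast at this
  linarith

lemma hasSum_inv_term (hg : ∀ n, n < g n) {D : ℕ} (hD : ∀ n, g n ≤ n + D) (ha : 0 < a)
    (hb : 0 < b) : HasSum (fun i => ((term g a b i : ℝ))⁻¹) (a / b) := by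
  have hsum : Summable fun i => ((term g a b i : ℝ))⁻¹ :=
    summable_of_sum_range_le (fun i => by positivity) fun n => by
      rw [sum_inv_term hg ha hb]; exact sub_le_self _ (rem_pos hg ha hb n).le
  have htend : Filter.Tendsto (rem g a b) Filter.atTop
      (nhds (a / b - ∑' i, ((term g a b i : ℝ))⁻¹)) := by
    refine (tendsto_const_nhds.sub hsum.hasSum.tendsto_sum_nat).congr fun n => ?_
    rw [sum_inv_term hg ha hb]; ring
  set L := (a / b : ℝ) - ∑' i, ((term g a b i : ℝ))⁻¹
  have hanti : Antitone (rem g a b) := antitone_nat_of_succ_le fun i => by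
    have : (0 : ℝ) < ((term g a b i : ℝ))⁻¹ := inv_pos.2 (Nat.cast_pos.2 (term_pos hg i))
    rw [rem_succ hg ha hb]; linarith
  have hL0 : 0 ≤ L := ge_of_tendsto' htend fun i => (rem_pos hg ha hb i).le
  obtain hL | hL := hL0.eq_or_lt
  · convert hsum.hasSum using 1
    linarith
  · exact absurd hsum <| not_summable_inv_of_le_add (fun i => Nat.cast_pos.2 (term_pos hg i))
      (by positivity) (term_succ_le hg hD ha hb hL (hanti.le_of_tendsto htend))

end Greedy

/-! ### Disjoint expansions of `2 ^ (-|bin t|)` -/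

def oddMulAbove (c n : ℕ) : ℕ := 2 ^ c * (2 * (n / 2 ^ (c + 1)) + 3)

lemma lt_oddMulAbove (c n : ℕ) : n < oddMulAbove c n := by
  have h := Nat.lt_mul_div_succ n (Nat.two_pow_pos (c + 1))
  rw [oddMulAbove, pow_succ] at *
  nlinarith [Nat.two_pow_pos c]

lemma oddMulAbove_le (c n : ℕ) : oddMulAbove c n ≤ n + 3 * 2 ^ c := by
  have h := Nat.mul_div_le n (2 ^ (c + 1))
  rw [oddMulAbove, pow_succ] at *
  nlinarith

lemma padicValNat_oddMulAbove (c n : ℕ) : padicValNat 2 (oddMulAbove c n) = c := by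
  have hodd : ¬ 2 ∣ 2 * (n / 2 ^ (c + 1)) + 3 := by omega
  rw [oddMulAbove, padicValNat.mul (by positivity) (by omega), padicValNat.prime_pow,
    padicValNat.eq_zero_of_not_dvd hodd, add_zero]

def chain (t i : ℕ) : ℕ := Greedy.term (oddMulAbove t) 1 (2 ^ (bin t).length) i

lemma padicValNat_chain (t i : ℕ) : padicValNat 2 (chain t i) = t :=
  padicValNat_oddMulAbove _ _

lemma chain_pos (t i : ℕ) : 0 < chain t i := Greedy.term_pos (lt_oddMulAbove t) i

lemma chain_inj {t t' i i' : ℕ} (h : chain t i = chain t' i') : t = t' ∧ i = i' := by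
  obtain rfl : t = t' := by rw [← padicValNat_chain t i, h, padicValNat_chain]
  exact ⟨rfl, (Greedy.term_strictMono (lt_oddMulAbove t)).injective h⟩

lemma tsum_inv_chain (t : ℕ) :
    ∑' i, ((chain t i : ℝ≥0∞))⁻¹ = (2 : ℝ≥0∞)⁻¹ ^ (bin t).length := by
  have h : HasSum (fun i => ((chain t i : ℝ))⁻¹) ((1 : ℕ) / (2 ^ (bin t).length : ℕ)) :=
    Greedy.hasSum_inv_term (lt_oddMulAbove t) (oddMulAbove_le t) one_pos (Nat.two_pow_pos _)
  have hinv : ∀ i, ((chain t i : ℝ≥0∞))⁻¹ = ENNReal.ofReal ((chain t i : ℝ))⁻¹ := fun i => by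
    rw [ENNReal.ofReal_inv_of_pos (Nat.cast_pos.2 (chain_pos t i)), ENNReal.ofReal_natCast]
  simp_rw [hinv]
  rw [← ENNReal.ofReal_tsum_of_nonneg (fun i => by positivity) h.summable, h.tsum_eq]
  push_cast
  rw [one_div, ← inv_pow, ENNReal.ofReal_pow (by norm_num), ENNReal.ofReal_inv_of_pos two_pos,
    ENNReal.ofReal_ofNat]

/-! ### Computability -/

lemma primrec_unbin : Primrec unbin := by
  have hbit : Primrec fun p : ℕ × Bool => Nat.bit p.2 p.1 :=
    (Primrec.cond Primrec.snd (Primrec.nat_double_succ.comp Primrec.fst)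
      (Primrec.nat_double.comp Primrec.fst)).of_eq fun p => by cases p.2 <;> rfl
  exact Primrec.list_foldl Primrec.id (Primrec.const 1) (hbit.comp Primrec.snd).to₂

lemma bits_eq_cons {n : ℕ} (hn : n ≠ 0) : Nat.bits n = n.bodd :: n.div2.bits := by
  conv_lhs => rw [← Nat.bit_bodd_div2 n]
  refine Nat.bits_append_bit _ _ fun h => ?_
  have h2 := Nat.bit_bodd_div2 n
  rw [h] at h2
  cases hb : n.bodd <;> simp_all

lemma primrec_bits : Primrec Nat.bits := by
  refine Primrec.nat_omega_rec' Nat.bits (m := id) (l := fun n => if n = 0 then [] else [n.div2])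
    (g := fun n l => some (if n = 0 then [] else n.bodd :: l.headI)) Primrec.id
    (Primrec.ite (Primrec.eq.comp Primrec.id (Primrec.const 0)) (Primrec.const [])
      (Primrec.list_cons.comp Primrec.nat_div2 (Primrec.const [])))
    (Primrec.option_some.comp (Primrec.ite (Primrec.eq.comp Primrec.fst (Primrec.const 0))
      (Primrec.const []) (Primrec.list_cons.comp (Primrec.nat_bodd.comp Primrec.fst)
        (Primrec.list_headI.comp Primrec.snd)))).to₂ ?_ ?_
  · intro n k hk
    split_ifs at hk with hn
    · simp at hk
    · simp only [List.mem_singleton] at hk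
      subst hk
      exact Nat.binaryRec_decreasing hn
  · intro n
    split_ifs with hn
    · simp [hn]
    · simp [bits_eq_cons hn]

lemma primrec_bin : Primrec bin :=
  Primrec.list_tail.comp (Primrec.list_reverse.comp primrec_bits)

lemma primrec_two_pow : Primrec fun n : ℕ => 2 ^ n :=
  (Primrec₂.unpaired'.1 Nat.Primrec.pow).comp (Primrec.const 2) Primrec.id

lemma primrec₂_oddMulAbove : Primrec₂ oddMulAbove :=
  Primrec.nat_mul.comp (primrec_two_pow.comp Primrec.fst)
    (Primrec.nat_add.comp (Primrec.nat_double.comp (Primrec.nat_div.comp Primrec.snd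
      (primrec_two_pow.comp (Primrec.succ.comp Primrec.fst)))) (Primrec.const 3))

lemma Greedy.primrec₂_nextTerm {α : Type*} [Primcodable α] {g : α → ℕ → ℕ} (hg : Primrec₂ g) :
    Primrec₂ fun a s => Greedy.nextTerm (g a) s :=
  hg.comp Primrec.fst (Primrec.nat_max.comp (Primrec.fst.comp Primrec.snd)
    (Primrec.nat_div.comp (Primrec.snd.comp (Primrec.snd.comp Primrec.snd))
      (Primrec.fst.comp (Primrec.snd.comp Primrec.snd))))

lemma Greedy.primrec₂_step {α : Type*} [Primcodable α] {g : α → ℕ → ℕ} (hg : Primrec₂ g) :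
    Primrec₂ fun a s => Greedy.step (g a) s := by
  have hx := Greedy.primrec₂_nextTerm hg
  have hnum : Primrec fun p : α × (ℕ × ℕ × ℕ) => p.2.2.1 :=
    Primrec.fst.comp (Primrec.snd.comp Primrec.snd)
  have hden : Primrec fun p : α × (ℕ × ℕ × ℕ) => p.2.2.2 :=
    Primrec.snd.comp (Primrec.snd.comp Primrec.snd)
  exact Primrec.pair hx (Primrec.pair (Primrec.nat_sub.comp (Primrec.nat_mul.comp hnum hx) hden)
    (Primrec.nat_mul.comp hden hx))

lemma primrec₂_chain : Primrec₂ chain := by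
  have hinit : Primrec fun t : ℕ => ((0 : ℕ), (1 : ℕ), 2 ^ (bin t).length) :=
    Primrec.pair (Primrec.const 0) (Primrec.pair (Primrec.const 1)
      (primrec_two_pow.comp (Primrec.list_length.comp primrec_bin)))
  have hstate : Primrec₂ fun t i => Greedy.state (oddMulAbove t) 1 (2 ^ (bin t).length) i :=
    Primrec.nat_iterate Primrec.snd (hinit.comp Primrec.fst)
      ((Greedy.primrec₂_step primrec₂_oddMulAbove).comp (Primrec.fst.comp Primrec.fst)
        Primrec.snd).to₂
  exact (Greedy.primrec₂_nextTerm primrec₂_oddMulAbove).comp Primrec.fst hstate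

/-! ### The tuatara machine -/

/-- `t = 0` is excluded because `bin 0 = bin 1`. -/
def chainSearch (w : List Bool) (k : ℕ) : Option (List Bool) :=
  if 0 < k.unpair.1 ∧ chain k.unpair.1 k.unpair.2 = unbin w then some (bin k.unpair.1) else none

def tuatara (C : List Bool →. List Bool) : List Bool →. List Bool := fun w =>
  (Nat.rfindOpt (chainSearch w)).bind fun p => C p

lemma primrec₂_chainSearch : Primrec₂ chainSearch := by
  have ht : Primrec fun p : List Bool × ℕ => p.2.unpair.1 :=
    Primrec.fst.comp (Primrec.unpair.comp Primrec.snd)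
  have hi : Primrec fun p : List Bool × ℕ => p.2.unpair.2 :=
    Primrec.snd.comp (Primrec.unpair.comp Primrec.snd)
  exact Primrec.ite ((Primrec.nat_lt.comp (Primrec.const 0) ht).and
      (Primrec.eq.comp (primrec₂_chain.comp ht hi) (primrec_unbin.comp Primrec.fst)))
    (Primrec.option_some.comp (primrec_bin.comp ht)) (Primrec.const none)

lemma partrec_tuatara {C : List Bool →. List Bool} (hC : Partrec C) : Partrec (tuatara C) :=
  (Partrec.rfindOpt primrec₂_chainSearch.to_comp).bind (hC.comp Computable.snd)

lemma exists_of_mem_rfindOpt_chainSearch {w p : List Bool}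
    (hp : p ∈ Nat.rfindOpt (chainSearch w)) :
    ∃ t i, 0 < t ∧ chain t i = unbin w ∧ bin t = p := by
  obtain ⟨k, hk⟩ := Nat.rfindOpt_spec hp
  rw [chainSearch] at hk
  split_ifs at hk with hcond
  · exact ⟨_, _, hcond.1, hcond.2, Option.mem_some_iff.1 hk⟩
  · simp at hk

lemma mem_dom_tuatara {C : List Bool →. List Bool} {w : List Bool} :
    w ∈ dom (tuatara C) ↔ ∃ t i, 0 < t ∧ chain t i = unbin w ∧ bin t ∈ dom C := by
  rw [dom, Set.mem_ofPred_eq, tuatara, Part.bind_dom]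
  constructor
  · rintro ⟨hdom, hC⟩
    obtain ⟨t, i, ht, hchain, hp⟩ := exists_of_mem_rfindOpt_chainSearch (Part.get_mem hdom)
    exact ⟨t, i, ht, hchain, hp ▸ hC⟩
  · rintro ⟨t, i, ht, hchain, hC⟩
    have hdom : (Nat.rfindOpt (chainSearch w)).Dom :=
      Nat.rfindOpt_dom.2 ⟨Nat.pair t i, bin t, by simp [chainSearch, ht, hchain]⟩
    obtain ⟨t', i', -, hchain', hp⟩ := exists_of_mem_rfindOpt_chainSearch (Part.get_mem hdom)
    obtain ⟨rfl, -⟩ := chain_inj (hchain'.trans hchain.symm)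
    exact ⟨hdom, hp ▸ hC⟩

lemma Ups_dom_tuatara (C : List Bool →. List Bool) :
    Ups (dom (tuatara C)) = Set.range fun x : dom C × ℕ => chain (unbin x.1) x.2 := by
  ext n
  simp only [Ups, Set.mem_ofPred_eq, mem_dom_tuatara, Set.mem_range, Prod.exists,
    Subtype.exists]
  constructor
  · rintro ⟨hn, t, i, ht, hchain, hC⟩
    refine ⟨bin t, hC, i, ?_⟩
    rw [unbin_bin ht.ne', hchain, unbin_bin (by omega)]
  · rintro ⟨p, hp, i, rfl⟩
    refine ⟨chain_pos _ _, unbin p, i, Nat.pos_of_ne_zero (unbin_ne_zero p), ?_, ?_⟩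
    · rw [unbin_bin (chain_pos _ _).ne']
    · rwa [bin_unbin]

lemma zeta_tuatara (C : List Bool →. List Bool) : zeta (tuatara C) = Omega C := by
  have hinj : Function.Injective fun x : dom C × ℕ => chain (unbin x.1) x.2 := by
    rintro ⟨⟨p, hp⟩, i⟩ ⟨⟨p', hp'⟩, i'⟩ h
    obtain ⟨hpp, rfl⟩ := chain_inj h
    obtain rfl := unbin_injective hpp
    rfl
  rw [zeta, Ups_dom_tuatara, tsum_range (fun n : ℕ => (n : ℝ≥0∞)⁻¹) hinj,
    ENNReal.tsum_prod (f := fun (p : dom C) i => ((chain (unbin p) i : ℕ) : ℝ≥0∞)⁻¹), Omega]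
  simp_rw [tsum_inv_chain, bin_unbin]

/-- For each self-delimiting Turing machine `C` there exists a tuatara machine
`V` such that `ζ_V = Ω_C`. -/
theorem stmt_7 (C : List Bool →. List Bool) (hC : Partrec C) (hsd : SelfDelim C) :
    ∃ V : List Bool →. List Bool, Partrec V ∧ zeta V ≤ 1 ∧ zeta V = Omega C :=
  ⟨tuatara C, partrec_tuatara hC, (zeta_tuatara C).trans_le (Omega_le_one hsd), zeta_tuatara C⟩
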